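/- Let E be a finite-dimensional real inner product space, let g : E → ℝ be differentiable and strongly convex with constant μ > 0 (i.e., g(y) ≥ g(x) + ⟪∇g(x), y - x⟫ + μ‖y - x‖² for all x, y), let h : E → ℝ be convex and differentiable with ∇h Lipschitz continuous with constant L_h, and set f = g - h. Suppose f(x) ≥ f_low for all x ∈ E for some f_low ∈ ℝ. Let (x_k)_{k≥0} be DCA iterates, i.e., for every k, x_{k+1} is a global minimizer of x ↦ g(x) - ⟪∇h(x_k), x - x_k⟫. Then ∇f(x_k) → 0 as k → ∞. -/

import Mathlib

/-!
Optimality of `x_{k+1}` for the surrogate gives `∇g(x_{k+1}) = ∇h(x_k)`. Strong convexity of `g`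
and convexity of `h` then turn this into the descent inequality
`f(x_{k+1}) + μ‖x_{k+1} - x_k‖² ≤ f(x_k)`, so, `f` being bounded below, the steps
`‖x_{k+1} - x_k‖` tend to zero. Finally `∇f(x_{k+1}) = ∇h(x_k) - ∇h(x_{k+1})`, whose norm is at
most `L‖x_{k+1} - x_k‖`.
-/

open RealInnerProductSpace Filter Topology

theorem ConvexOn.add_inner_gradient_le {E : Type*} [NormedAddCommGroup E] [InnerProductSpace ℝ E]
    [CompleteSpace E] {s : Set E} {h : E → ℝ} (hconv : ConvexOn ℝ s h) {x y : E}
    (hx : x ∈ s) (hy : y ∈ s) (hdiff : DifferentiableAt ℝ h x) :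
    h x + ⟪gradient h x, y - x⟫ ≤ h y := by
  have hderiv : HasDerivAt (h ∘ AffineMap.lineMap x y) ⟪gradient h x, y - x⟫ (0 : ℝ) := by
    have hdiff' : HasFDerivAt h (fderiv ℝ h x) (AffineMap.lineMap x y (0 : ℝ)) := by
      simpa using hdiff.hasFDerivAt
    simpa [inner_gradient_left] using hdiff'.comp_hasDerivAt (0 : ℝ) AffineMap.hasDerivAt_lineMap
  have hslope := (hconv.comp_affineMap (AffineMap.lineMap x y)).le_slope_of_hasDerivAt
    (by simpa using hx) (by simpa using hy) zero_lt_one hderiv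
  simp only [slope_def_field, Function.comp_apply, AffineMap.lineMap_apply_zero,
    AffineMap.lineMap_apply_one, sub_zero, div_one] at hslope
  linarith

theorem HasGradientAt.sub {𝕜 F : Type*} [RCLike 𝕜] [NormedAddCommGroup F] [InnerProductSpace 𝕜 F]
    [CompleteSpace F] {f g : F → 𝕜} {f' g' x : F} (hf : HasGradientAt f f' x)
    (hg : HasGradientAt g g' x) : HasGradientAt (fun y => f y - g y) (f' - g') x := by
  rw [hasGradientAt_iff_hasFDerivAt, map_sub]
  exact hf.hasFDerivAt.sub hg.hasFDerivAt

theorem gradient_eq_of_isLocalMin_sub_inner {E : Type*} [NormedAddCommGroup E]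
    [InnerProductSpace ℝ E] [CompleteSpace E] {g : E → ℝ} {c x₀ z : E}
    (hmin : IsLocalMin (fun y => g y - ⟪c, y - x₀⟫) z) (hg : DifferentiableAt ℝ g z) :
    gradient g z = c := by
  have hinner : HasGradientAt (fun y => ⟪c, y - x₀⟫) c z := by
    have := ((InnerProductSpace.toDual ℝ E c).hasFDerivAt (x := z)).sub_const ⟪c, x₀⟫
    simpa [inner_sub_right] using this.hasGradientAt
  exact sub_eq_zero.mp <| (InnerProductSpace.toDual ℝ E).injective <| by
    simpa using hmin.hasFDerivAt_eq_zero (hg.hasGradientAt.sub hinner).hasFDerivAt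

theorem tendsto_zero_of_add_le_of_bddBelow {F a : ℕ → ℝ} (ha : ∀ k, 0 ≤ a k)
    (hF : ∀ k, F (k + 1) + a k ≤ F k) (hbdd : BddBelow (Set.range F)) :
    Tendsto a atTop (𝓝 0) := by
  have hanti : Antitone F := antitone_nat_of_succ_le fun k => by linarith [ha k, hF k]
  have hlim := tendsto_atTop_ciInf hanti hbdd
  have hdiff : Tendsto (fun k => F k - F (k + 1)) atTop (𝓝 0) := by
    simpa using hlim.sub (hlim.comp (tendsto_add_atTop_nat 1))
  exact squeeze_zero ha (fun k => by linarith [hF k]) hdiff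

section DCA

variable {E : Type*} [NormedAddCommGroup E] [InnerProductSpace ℝ E] [CompleteSpace E]
  {g h : E → ℝ} {x z : E}

noncomputable def dcaSurrogate (g h : E → ℝ) (x : E) : E → ℝ :=
  fun y => g y - ⟪gradient h x, y - x⟫

theorem gradient_eq_of_isMinOn_dcaSurrogate (hz : IsMinOn (dcaSurrogate g h x) Set.univ z)
    (hg : DifferentiableAt ℝ g z) : gradient g z = gradient h x :=
  gradient_eq_of_isLocalMin_sub_inner (hz.isLocalMin univ_mem) hg

theorem sub_add_sq_le_of_isMinOn_dcaSurrogate {μ : ℝ}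
    (hsc : ∀ x y : E, g y ≥ g x + ⟪gradient g x, y - x⟫ + μ * ‖y - x‖ ^ 2)
    (hconv : ConvexOn ℝ Set.univ h) (hg : DifferentiableAt ℝ g z) (hh : DifferentiableAt ℝ h x)
    (hz : IsMinOn (dcaSurrogate g h x) Set.univ z) :
    g z - h z + μ * ‖z - x‖ ^ 2 ≤ g x - h x := by
  have hg_upper := hsc z x
  rw [gradient_eq_of_isMinOn_dcaSurrogate hz hg, norm_sub_rev, ← neg_sub z x, inner_neg_right]
    at hg_upper
  have hh_lower := hconv.add_inner_gradient_le (Set.mem_univ x) (Set.mem_univ z) hh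
  linarith

theorem norm_gradient_sub_le_of_isMinOn_dcaSurrogate {L : ℝ}
    (hlip : ∀ x y : E, ‖gradient h x - gradient h y‖ ≤ L * ‖x - y‖)
    (hg : DifferentiableAt ℝ g z) (hh : DifferentiableAt ℝ h z)
    (hz : IsMinOn (dcaSurrogate g h x) Set.univ z) :
    ‖gradient (fun y => g y - h y) z‖ ≤ L * ‖z - x‖ := by
  rw [(hg.hasGradientAt.sub hh.hasGradientAt).gradient,
    gradient_eq_of_isMinOn_dcaSurrogate hz hg, norm_sub_rev z x]
  exact hlip x z

end DCA

/-- The gradients of `f = g - h` at the DCA iterates converge to zero. -/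
theorem dca_gradient_tendsto_zero
    {E : Type*} [NormedAddCommGroup E] [InnerProductSpace ℝ E] [FiniteDimensional ℝ E]
    (g h : E → ℝ) (μ L : ℝ) (hμ : 0 < μ)
    (hg : Differentiable ℝ g)
    (hsc : ∀ x y : E, g y ≥ g x + ⟪gradient g x, y - x⟫ + μ * ‖y - x‖ ^ 2)
    (hh : Differentiable ℝ h) (hconv : ConvexOn ℝ Set.univ h)
    (hlip : ∀ x y : E, ‖gradient h x - gradient h y‖ ≤ L * ‖x - y‖)
    (flow : ℝ) (hflow : ∀ x : E, g x - h x ≥ flow)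
    (x : ℕ → E)
    (hmin : ∀ k : ℕ, ∀ y : E,
      g (x (k + 1)) - ⟪gradient h (x k), x (k + 1) - x k⟫ ≤
        g y - ⟪gradient h (x k), y - x k⟫) :
    Filter.Tendsto (fun k : ℕ => gradient (fun y => g y - h y) (x k))
      Filter.atTop (nhds 0) := by
  have hstep : ∀ k, IsMinOn (dcaSurrogate g h (x k)) Set.univ (x (k + 1)) :=
    fun k y _ => hmin k y
  have hdecrease : Tendsto (fun k => μ * ‖x (k + 1) - x k‖ ^ 2) atTop (𝓝 0) :=
    tendsto_zero_of_add_le_of_bddBelow (fun k => by positivity)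
      (fun k => sub_add_sq_le_of_isMinOn_dcaSurrogate hsc hconv (hg _) (hh _) (hstep k))
      ⟨flow, by rintro _ ⟨k, rfl⟩; exact hflow (x k)⟩
  have hdist : Tendsto (fun k => ‖x (k + 1) - x k‖) atTop (𝓝 0) := by
    simpa [← mul_assoc, inv_mul_cancel₀ hμ.ne'] using (hdecrease.const_mul μ⁻¹).sqrt
  refine (tendsto_add_atTop_iff_nat 1).mp <|
    squeeze_zero_norm (a := fun k => L * ‖x (k + 1) - x k‖)
    (fun k => norm_gradient_sub_le_of_isMinOn_dcaSurrogate hlip (hg _) (hh _) (hstep k)) ?_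
  simpa using hdist.const_mul L
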